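/- arXiv:1903.07093 — 2 statements merged into one kernel-verified Lean document; each statement's English description precedes it below -/
import Mathlib

section
/- Let ν, γ be probability measures on ℝⁿ, K ⊆ ℝⁿ a set, and f : ℝⁿ → ℝⁿ a measurable map with f(x) ∈ K for all x. Then for any coupling π of ν and γ, ∫ ⟨x, f(x)⟩ dν(x) ≤ ∫ sup_{t∈K} ⟨y, t⟩ dγ(y) + (1/2) ∫ |f(x)|² dν(x) + (1/2) ∫ |x − y|² dπ(x, y), assuming all integrals are well-defined and finite. -/
open MeasureTheory Real
open scoped RealInnerProductSpace ENNReal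

noncomputable def stdGaussian (n : ℕ) : Measure (EuclideanSpace ℝ (Fin n)) :=
  (volume : Measure (EuclideanSpace ℝ (Fin n))).withDensity
    fun x => ENNReal.ofReal ((2 * π) ^ (-(n : ℝ) / 2) * Real.exp (-‖x‖ ^ 2 / 2))

noncomputable def lap {n : ℕ} (f : EuclideanSpace ℝ (Fin n) → ℝ)
    (x : EuclideanSpace ℝ (Fin n)) : ℝ :=
  ∑ i, fderiv ℝ (fun y => gradient f y) x (EuclideanSpace.single i 1) i

/-- `y ↦ sup_{t ∈ K} ⟨y, t⟩`. -/
noncomputable def gaussWidthFn {n : ℕ} (K : Set (EuclideanSpace ℝ (Fin n)))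
    (y : EuclideanSpace ℝ (Fin n)) : ℝ :=
  ⨆ t : K, ⟪y, (t : EuclideanSpace ℝ (Fin n))⟫

def IsCoupling {n : ℕ}
    (p : Measure (EuclideanSpace ℝ (Fin n) × EuclideanSpace ℝ (Fin n)))
    (ν γ : Measure (EuclideanSpace ℝ (Fin n))) : Prop :=
  p.map Prod.fst = ν ∧ p.map Prod.snd = γ

/-- Squared quadratic Wasserstein distance. -/
noncomputable def W2sq {n : ℕ} (ν γ : Measure (EuclideanSpace ℝ (Fin n))) : ℝ :=
  sInf {r : ℝ | ∃ p, IsCoupling p ν γ ∧ IsProbabilityMeasure p ∧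
    r = ∫ q, ‖q.1 - q.2‖ ^ 2 ∂p}

/-!
Split `⟪x, f x⟫ = ⟪y, f x⟫ + ⟪x - y, f x⟫` for `(x, y)` drawn from the coupling. The first term is
at most the support function of `K` at `y`, since `f x ∈ K`; the second is at most
`‖f x‖ ‖x - y‖ ≤ ‖f x‖² / 2 + ‖x - y‖² / 2` by Cauchy–Schwarz and AM–GM. Integrating against the
coupling, whose marginals are `ν` and `γ`, gives the estimate.
-/

theorem real_inner_le_inner_add_half_norm_sq_add_half_norm_sub_sq {F : Type*}
    [NormedAddCommGroup F] [InnerProductSpace ℝ F] (x y t : F) :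
    ⟪x, t⟫ ≤ ⟪y, t⟫ + (1 / 2) * ‖t‖ ^ 2 + (1 / 2) * ‖x - y‖ ^ 2 := by
  have hsplit : ⟪x, t⟫ = ⟪y, t⟫ + ⟪x - y, t⟫ := by rw [inner_sub_left]; ring
  have hcs : ⟪x - y, t⟫ ≤ ‖x - y‖ * ‖t‖ := real_inner_le_norm _ _
  have hamgm := two_mul_le_add_sq ‖x - y‖ ‖t‖
  linarith

theorem inner_le_gaussWidthFn {n : ℕ} {K : Set (EuclideanSpace ℝ (Fin n))}
    {y : EuclideanSpace ℝ (Fin n)}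
    (hbdd : BddAbove (Set.range fun t : K => ⟪y, (t : EuclideanSpace ℝ (Fin n))⟫))
    {t : EuclideanSpace ℝ (Fin n)} (ht : t ∈ K) : ⟪y, t⟫ ≤ gaussWidthFn K y :=
  le_ciSup hbdd (⟨t, ht⟩ : K)

namespace MeasureTheory

variable {α β : Type*} [MeasurableSpace α] [MeasurableSpace β]

theorem MeasurePreserving.integral_comp_of_aestronglyMeasurable {E : Type*}
    [NormedAddCommGroup E] [NormedSpace ℝ E] {μ : Measure α} {ν : Measure β}
    {f : α → β} (hf : MeasurePreserving f μ ν) {g : β → E} (hg : AEStronglyMeasurable g ν) :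
    ∫ x, g (f x) ∂μ = ∫ y, g y ∂ν := by
  rw [← hf.map_eq] at hg ⊢
  exact (integral_map hf.measurable.aemeasurable hg).symm

theorem integral_le_integral_add_of_le_of_map_fst_of_map_snd {p : Measure (α × β)}
    {μ : Measure α} {ν : Measure β} (hfst : p.map Prod.fst = μ) (hsnd : p.map Prod.snd = ν)
    {F : α → ℝ} {G : β → ℝ} {H : α × β → ℝ}
    (hF : Integrable F μ) (hG : Integrable G ν) (hH : Integrable H p)
    (hle : ∀ q, F q.1 ≤ G q.2 + H q) :
    ∫ x, F x ∂μ ≤ ∫ y, G y ∂ν + ∫ q, H q ∂p := by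
  have hpfst : MeasurePreserving Prod.fst p μ := ⟨measurable_fst, hfst⟩
  have hpsnd : MeasurePreserving Prod.snd p ν := ⟨measurable_snd, hsnd⟩
  have hFp : Integrable (fun q : α × β => F q.1) p := hpfst.integrable_comp_of_integrable hF
  have hGp : Integrable (fun q : α × β => G q.2) p := hpsnd.integrable_comp_of_integrable hG
  rw [← hpfst.integral_comp_of_aestronglyMeasurable hF.aestronglyMeasurable,
    ← hpsnd.integral_comp_of_aestronglyMeasurable hG.aestronglyMeasurable,
    ← integral_add hGp hH]
  exact integral_mono hFp (hGp.add hH) hle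

end MeasureTheory

theorem coupling_core_estimate_general (n : ℕ)
    (ν γ : Measure (EuclideanSpace ℝ (Fin n)))
    (p : Measure (EuclideanSpace ℝ (Fin n) × EuclideanSpace ℝ (Fin n)))
    (hcoup : IsCoupling p ν γ)
    (K : Set (EuclideanSpace ℝ (Fin n)))
    (f : EuclideanSpace ℝ (Fin n) → EuclideanSpace ℝ (Fin n))
    (hfK : ∀ x, f x ∈ K)
    (hbdd : ∀ y : EuclideanSpace ℝ (Fin n),
      BddAbove (Set.range fun t : K => ⟪y, (t : EuclideanSpace ℝ (Fin n))⟫))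
    (h1 : Integrable (fun x => ⟪x, f x⟫) ν)
    (h2 : Integrable (gaussWidthFn K) γ)
    (h3 : Integrable (fun x => ‖f x‖ ^ 2) ν)
    (h4 : Integrable (fun q => ‖q.1 - q.2‖ ^ 2) p) :
    ∫ x, ⟪x, f x⟫ ∂ν ≤ ∫ y, gaussWidthFn K y ∂γ
      + (1 / 2) * ∫ x, ‖f x‖ ^ 2 ∂ν
      + (1 / 2) * ∫ q, ‖q.1 - q.2‖ ^ 2 ∂p := by
  have hle : ∀ q : EuclideanSpace ℝ (Fin n) × EuclideanSpace ℝ (Fin n),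
      ⟪q.1, f q.1⟫ - (1 / 2) * ‖f q.1‖ ^ 2
        ≤ gaussWidthFn K q.2 + (1 / 2) * ‖q.1 - q.2‖ ^ 2 := fun q => by
    have hsupp := inner_le_gaussWidthFn (hbdd q.2) (hfK q.1)
    have hpt := real_inner_le_inner_add_half_norm_sq_add_half_norm_sub_sq q.1 q.2 (f q.1)
    linarith
  have hint := integral_le_integral_add_of_le_of_map_fst_of_map_snd hcoup.1 hcoup.2
    (F := fun x => ⟪x, f x⟫ - (1 / 2) * ‖f x‖ ^ 2) (h1.sub (h3.const_mul (1 / 2))) h2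
    (h4.const_mul (1 / 2)) hle
  rw [integral_sub h1 (h3.const_mul _), integral_const_mul, integral_const_mul] at hint
  linarith

theorem coupling_core_estimate (n : ℕ)
    (ν γ : Measure (EuclideanSpace ℝ (Fin n)))
    (p : Measure (EuclideanSpace ℝ (Fin n) × EuclideanSpace ℝ (Fin n)))
    (hν : IsProbabilityMeasure ν) (hγ : IsProbabilityMeasure γ)
    (hp : IsProbabilityMeasure p) (hcoup : IsCoupling p ν γ)
    (K : Set (EuclideanSpace ℝ (Fin n))) (hKne : K.Nonempty)
    (f : EuclideanSpace ℝ (Fin n) → EuclideanSpace ℝ (Fin n))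
    (hfm : Measurable f) (hfK : ∀ x, f x ∈ K)
    (hbdd : ∀ y : EuclideanSpace ℝ (Fin n),
      BddAbove (Set.range fun t : K => ⟪y, (t : EuclideanSpace ℝ (Fin n))⟫))
    (h1 : Integrable (fun x => ⟪x, f x⟫) ν)
    (h2 : Integrable (gaussWidthFn K) γ)
    (h3 : Integrable (fun x => ‖f x‖ ^ 2) ν)
    (h4 : Integrable (fun q => ‖q.1 - q.2‖ ^ 2) p) :
    ∫ x, ⟪x, f x⟫ ∂ν ≤ ∫ y, gaussWidthFn K y ∂γ
      + (1 / 2) * ∫ x, ‖f x‖ ^ 2 ∂ν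
      + (1 / 2) * ∫ q, ‖q.1 - q.2‖ ^ 2 ∂p :=
  coupling_core_estimate_general n ν γ p hcoup K f hfK hbdd h1 h2 h3 h4
end

section
/- Under the same assumptions as the reverse logarithmic Sobolev inequality (ν = e^f γ with finite entropy, Fisher information, Gaussian width D(ν) of K = {∇f(x)}, and M = −inf Δf finite), one has the reverse transportation cost inequality D_KL(ν||γ) ≤ (1/2) W₂²(ν, γ) + M + D(ν), where W₂ is the quadratic Wasserstein distance. -/
open MeasureTheory Real
open scoped RealInnerProductSpace ENNReal

/-!
Write `Q y = sup_x (f x - ‖x - y‖² / 2)` (`supConv`), `h` for the support function of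
`K = range ∇f` and `φ` for the Gaussian density. Since every `⟪y, ·⟫` is bounded above on `K`, the
gradient is bounded, so `f` is Lipschitz: the suprema `Q y` are attained and all integrals below
are finite.

Integrating `f x ≤ ‖x - y‖² / 2 + Q y` against a coupling gives `∫ f dν ≤ W₂² / 2 + ∫ Q dγ`, and by
Jensen it remains to show `∫ exp (Q - h) dγ ≤ e^M`. If `x` attains `Q y`, then `y = x - ∇f x`,
`∇²f x ≤ I`, `Q y = f x - ‖∇f x‖² / 2` and `h y ≥ ⟪y, ∇f x⟫`, which together give
`exp (Q y - h y) φ y ≤ e^{f x} φ x`. The map `x ↦ x - ∇f x` sends the set of such maximisers onto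
`ℝⁿ` with Jacobian `det (I - ∇²f x) ≤ exp (-Δf x) ≤ e^M`, so the area formula (an inequality,
which needs no injectivity) bounds `∫ exp (Q - h) dγ` by `e^M ∫ e^f dγ = e^M`.
-/

namespace ReverseTransport

open Set Filter Topology
open scoped NNReal

section Gaussian

variable {n : ℕ}

noncomputable def gaussDensity (n : ℕ) (x : EuclideanSpace ℝ (Fin n)) : ℝ :=
  (2 * π) ^ (-(n : ℝ) / 2) * rexp (-‖x‖ ^ 2 / 2)

lemma gaussDensity_pos (x : EuclideanSpace ℝ (Fin n)) : 0 < gaussDensity n x := by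
  unfold gaussDensity; positivity

lemma continuous_gaussDensity : Continuous (gaussDensity n) := by
  unfold gaussDensity; fun_prop

lemma gaussDensity_sub (x g : EuclideanSpace ℝ (Fin n)) :
    gaussDensity n (x - g) = gaussDensity n x * rexp (⟪x, g⟫ - ‖g‖ ^ 2 / 2) := by
  rw [gaussDensity, gaussDensity, norm_sub_sq_real, mul_assoc, ← Real.exp_add]
  ring_nf

lemma stdGaussian_eq_withDensity :
    stdGaussian n = volume.withDensity fun x => ENNReal.ofReal (gaussDensity n x) := rfl

lemma integrable_exp_neg_mul_norm_sq {b : ℝ} (hb : 0 < b) :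
    Integrable fun x : EuclideanSpace ℝ (Fin n) => rexp (-b * ‖x‖ ^ 2) := by
  simpa [Complex.norm_exp, ← Complex.ofReal_pow] using
    (GaussianFourier.integrable_cexp_neg_mul_sq_norm_add
      (V := EuclideanSpace ℝ (Fin n)) (b := b) (by simpa using hb) 0 0).norm

lemma integrable_gaussDensity : Integrable (gaussDensity n) :=
  ((integrable_exp_neg_mul_norm_sq (n := n) (b := 1 / 2) (by norm_num)).const_mul
    ((2 * π) ^ (-(n : ℝ) / 2))).congr (.of_forall fun x => by simp only [gaussDensity]; ring_nf)

lemma integral_gaussDensity : ∫ x, gaussDensity n x = 1 := by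
  have h := GaussianFourier.integral_rexp_neg_mul_sq_norm
    (V := EuclideanSpace ℝ (Fin n)) (b := 1 / 2) (by norm_num)
  simp only [finrank_euclideanSpace, Fintype.card_fin] at h
  have h' : ∫ x : EuclideanSpace ℝ (Fin n), rexp (-‖x‖ ^ 2 / 2) = (2 * π) ^ ((n : ℝ) / 2) := by
    convert h using 3 <;> ring_nf
  simp only [gaussDensity, integral_const_mul, h',
    ← Real.rpow_add (by positivity : (0 : ℝ) < 2 * π)]
  ring_nf; simp

lemma lintegral_stdGaussian_ofReal {g : EuclideanSpace ℝ (Fin n) → ℝ} (hg : Measurable g) :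
    ∫⁻ x, ENNReal.ofReal (g x) ∂stdGaussian n = ∫⁻ x, ENNReal.ofReal (gaussDensity n x * g x) := by
  rw [stdGaussian_eq_withDensity, lintegral_withDensity_eq_lintegral_mul _
    continuous_gaussDensity.measurable.ennreal_ofReal hg.ennreal_ofReal]
  simp only [Pi.mul_apply, ENNReal.ofReal_mul (gaussDensity_pos _).le]

lemma lintegral_gaussDensity_mul_eq_one {g : EuclideanSpace ℝ (Fin n) → ℝ} (hg : Measurable g)
    (hprob : IsProbabilityMeasure ((stdGaussian n).withDensity fun x => ENNReal.ofReal (g x))) :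
    ∫⁻ x, ENNReal.ofReal (gaussDensity n x * g x) = 1 := by
  have := hprob.measure_univ
  rwa [withDensity_apply _ MeasurableSet.univ, Measure.restrict_univ,
    lintegral_stdGaussian_ofReal hg] at this

instance : IsProbabilityMeasure (stdGaussian n) := by
  constructor
  rw [stdGaussian_eq_withDensity, withDensity_apply _ MeasurableSet.univ, Measure.restrict_univ,
    ← ofReal_integral_eq_lintegral_ofReal integrable_gaussDensity
      (Filter.Eventually.of_forall fun x => (gaussDensity_pos x).le), integral_gaussDensity,
    ENNReal.ofReal_one]

end Gaussian

section Bounds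

variable {E : Type*} [NormedAddCommGroup E] [InnerProductSpace ℝ E]

lemma exists_norm_le_of_bddAbove_inner [FiniteDimensional ℝ E] {K : Set E}
    (hK : ∀ y : E, BddAbove (Set.range fun t : K => ⟪y, (t : E)⟫)) :
    ∃ R : ℝ≥0, ∀ t ∈ K, ‖t‖ ≤ R := by
  have hK' : ∀ y : E, ∃ B, ∀ t ∈ K, ⟪y, t⟫ ≤ B := fun y =>
    (hK y).imp fun B hB t ht => hB ⟨⟨t, ht⟩, rfl⟩
  choose B hB using hK'
  let b := stdOrthonormalBasis ℝ E
  refine ⟨(∑ i, max (B (b i)) (B (-b i))).toNNReal, fun t ht => ?_⟩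
  calc ‖t‖ = ‖∑ i, ⟪b i, t⟫ • b i‖ := by rw [b.sum_repr']
    _ ≤ ∑ i, ‖⟪b i, t⟫ • b i‖ := norm_sum_le _ _
    _ = ∑ i, |⟪b i, t⟫| := by simp [norm_smul, b.orthonormal.1]
    _ ≤ ∑ i, max (B (b i)) (B (-b i)) := by
      refine Finset.sum_le_sum fun i _ => abs_le.2 ⟨?_, ?_⟩
      · have := hB (-b i) t ht
        rw [inner_neg_left] at this
        linarith [le_max_right (B (b i)) (B (-b i))]
      · exact (hB (b i) t ht).trans (le_max_left _ _)
    _ ≤ _ := Real.le_coe_toNNReal _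

lemma lipschitzWith_of_norm_gradient_le [CompleteSpace E] {f : E → ℝ} {C : ℝ≥0}
    (hf : Differentiable ℝ f) (hC : ∀ x, ‖gradient f x‖ ≤ C) : LipschitzWith C f :=
  lipschitzWith_of_nnnorm_fderiv_le hf fun x => by
    rw [← NNReal.coe_le_coe, coe_nnnorm, ← toDual_gradient, LinearIsometryEquiv.norm_map]
    exact hC x

end Bounds

section Width

variable {n : ℕ} {K : Set (EuclideanSpace ℝ (Fin n))}

lemma inner_le_gaussWidthFn {y t : EuclideanSpace ℝ (Fin n)}
    (hK : BddAbove (Set.range fun s : K => ⟪y, (s : EuclideanSpace ℝ (Fin n))⟫)) (ht : t ∈ K) :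
    ⟪y, t⟫ ≤ gaussWidthFn K y :=
  le_ciSup hK (⟨t, ht⟩ : K)

lemma bddAbove_range_inner_of_norm_le {R : ℝ} (hR : ∀ t ∈ K, ‖t‖ ≤ R)
    (y : EuclideanSpace ℝ (Fin n)) :
    BddAbove (Set.range fun s : K => ⟪y, (s : EuclideanSpace ℝ (Fin n))⟫) :=
  ⟨‖y‖ * R, Set.forall_mem_range.2 fun s =>
    (real_inner_le_norm _ _).trans (by gcongr; exact hR s s.2)⟩

lemma lipschitzWith_gaussWidthFn {R : ℝ≥0} (hne : K.Nonempty) (hR : ∀ t ∈ K, ‖t‖ ≤ R) :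
    LipschitzWith R (gaussWidthFn K) := by
  have : Nonempty K := hne.to_subtype
  refine LipschitzWith.of_le_add_mul R fun y y' => ciSup_le fun t => ?_
  have h1 := inner_le_gaussWidthFn (bddAbove_range_inner_of_norm_le hR y') t.2
  have h2 : ⟪y - y', (t : EuclideanSpace ℝ (Fin n))⟫ ≤ R * dist y y' := by
    rw [dist_eq_norm, mul_comm]
    exact (real_inner_le_norm _ _).trans (by gcongr; exact hR t t.2)
  rw [inner_sub_left] at h2
  linarith

end Width

section SupConv

variable {E : Type*} [NormedAddCommGroup E]

noncomputable def supConv (f : E → ℝ) (y : E) : ℝ :=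
  ⨆ x, (f x - ‖x - y‖ ^ 2 / 2)

variable {f : E → ℝ} {K : ℝ≥0}

lemma abs_le_of_lipschitzWith (hf : LipschitzWith K f) (x : E) : |f x| ≤ |f 0| + K * ‖x‖ := by
  have h := hf.dist_le_mul x 0
  rw [Real.dist_eq, dist_zero_right] at h
  linarith [abs_sub_abs_le_abs_sub (f x) (f 0)]

lemma sub_norm_sq_le_of_lipschitzWith (hf : LipschitzWith K f) (x y : E) :
    f x - ‖x - y‖ ^ 2 / 2 ≤ f y + K ^ 2 / 2 := by
  have h := hf.dist_le_mul x y
  rw [Real.dist_eq, dist_eq_norm] at h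
  nlinarith [le_abs_self (f x - f y), sq_nonneg (‖x - y‖ - K)]

lemma bddAbove_range_sub_norm_sq (hf : LipschitzWith K f) (y : E) :
    BddAbove (range fun x => f x - ‖x - y‖ ^ 2 / 2) :=
  ⟨f y + K ^ 2 / 2, forall_mem_range.2 fun x => sub_norm_sq_le_of_lipschitzWith hf x y⟩

lemma sub_norm_sq_le_supConv (hf : LipschitzWith K f) (x y : E) :
    f x - ‖x - y‖ ^ 2 / 2 ≤ supConv f y :=
  le_ciSup (bddAbove_range_sub_norm_sq hf y) x

lemma le_supConv (hf : LipschitzWith K f) (y : E) : f y ≤ supConv f y := by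
  simpa using sub_norm_sq_le_supConv hf y y

lemma supConv_le (hf : LipschitzWith K f) (y : E) : supConv f y ≤ f y + K ^ 2 / 2 :=
  ciSup_le fun x => sub_norm_sq_le_of_lipschitzWith hf x y

lemma supConv_eq_of_isMaxOn (hf : LipschitzWith K f) {x y : E}
    (hx : IsMaxOn (fun z => f z - ‖z - y‖ ^ 2 / 2) univ x) :
    supConv f y = f x - ‖x - y‖ ^ 2 / 2 :=
  le_antisymm (ciSup_le fun z => hx (mem_univ z)) (sub_norm_sq_le_supConv hf x y)

lemma norm_sub_le_of_isMaxOn (hf : LipschitzWith K f) {x y : E}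
    (hx : IsMaxOn (fun z => f z - ‖z - y‖ ^ 2 / 2) univ x) : ‖x - y‖ ≤ 2 * K := by
  have hmax : f y ≤ f x - ‖x - y‖ ^ 2 / 2 := by simpa using hx (mem_univ y)
  have hlip := hf.dist_le_mul y x
  rw [Real.dist_eq, dist_comm, dist_eq_norm] at hlip
  nlinarith [neg_abs_le (f y - f x), norm_nonneg (x - y)]

lemma exists_isMaxOn_sub_norm_sq [ProperSpace E] (hf : LipschitzWith K f) (y : E) :
    ∃ x, IsMaxOn (fun z => f z - ‖z - y‖ ^ 2 / 2) univ x := by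
  have hfar : ∀ᶠ z in cocompact E, f z - ‖z - y‖ ^ 2 / 2 ≤ f y - ‖y - y‖ ^ 2 / 2 := by
    filter_upwards [(isCompact_closedBall y (2 * K)).compl_mem_cocompact] with z hz
    rw [mem_compl_iff, Metric.mem_closedBall, dist_eq_norm, not_le] at hz
    have hlip := hf.dist_le_mul z y
    rw [Real.dist_eq, dist_eq_norm] at hlip
    rw [sub_self, norm_zero]
    nlinarith [le_abs_self (f z - f y), mul_le_mul_of_nonneg_right hz.le (norm_nonneg (z - y))]
  have hcont : Continuous fun z => f z - ‖z - y‖ ^ 2 / 2 := by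
    have := hf.continuous
    fun_prop
  obtain ⟨x, hx⟩ := hcont.exists_forall_ge' y hfar
  exact ⟨x, fun z _ => hx z⟩

lemma supConv_le_supConv_add [ProperSpace E] (hf : LipschitzWith K f) (y y' : E) :
    supConv f y ≤ supConv f y' + (2 * K * ‖y - y'‖ + ‖y - y'‖ ^ 2 / 2) := by
  obtain ⟨x, hx⟩ := exists_isMaxOn_sub_norm_sq hf y
  have hxy := norm_sub_le_of_isMaxOn hf hx
  have htri : ‖x - y'‖ ≤ ‖x - y‖ + ‖y - y'‖ := norm_sub_le_norm_sub_add_norm_sub x y y'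
  have := sub_norm_sq_le_supConv hf x y'
  rw [supConv_eq_of_isMaxOn hf hx]
  nlinarith [norm_nonneg (x - y'), norm_nonneg (x - y), norm_nonneg (y - y')]

lemma continuous_supConv [ProperSpace E] (hf : LipschitzWith K f) : Continuous (supConv f) := by
  refine continuous_iff_continuousAt.2 fun y => ?_
  have hsmall : Tendsto (fun y' => 2 * K * ‖y' - y‖ + ‖y' - y‖ ^ 2 / 2) (𝓝 y) (𝓝 0) := by
    have : Continuous fun y' : E => 2 * K * ‖y' - y‖ + ‖y' - y‖ ^ 2 / 2 := by fun_prop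
    simpa using this.tendsto y
  rw [ContinuousAt, tendsto_iff_norm_sub_tendsto_zero]
  refine squeeze_zero (fun _ => norm_nonneg _) (fun y' => ?_) hsmall
  have h1 := supConv_le_supConv_add hf y' y
  have h2 := supConv_le_supConv_add hf y y'
  rw [norm_sub_rev y y'] at h2
  rw [Real.norm_eq_abs, abs_le]
  constructor <;> linarith

end SupConv

lemma _root_.IsLocalMax.deriv_deriv_nonpos {g : ℝ → ℝ} {a : ℝ} (hmax : IsLocalMax g a)
    (hc : ContinuousAt g a) : deriv (deriv g) a ≤ 0 := by
  by_contra! hpos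
  -- a positive second derivative would also make `a` a local minimum, so `g` is locally constant
  have hmin := isLocalMin_of_deriv_deriv_pos hpos hmax.deriv_eq_zero hc
  have hconst : g =ᶠ[𝓝 a] fun _ => g a :=
    (hmin.and hmax).mono fun _ h => le_antisymm h.2 h.1
  have hderiv : deriv g =ᶠ[𝓝 a] fun _ => 0 :=
    hconst.eventuallyEq_nhds.mono fun _ h => by rw [h.deriv_eq, deriv_const]
  simp [hderiv.deriv_eq] at hpos

section Calculus

variable {E : Type*} [NormedAddCommGroup E] [InnerProductSpace ℝ E] [CompleteSpace E]
  {f : E → ℝ}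

lemma contDiff_gradient {k m : WithTop ℕ∞} (hf : ContDiff ℝ k f) (hmk : m + 1 ≤ k) :
    ContDiff ℝ m (gradient f) :=
  (InnerProductSpace.toDual ℝ E).symm.contDiff.comp (hf.fderiv_right hmk)

lemma inner_fderiv_gradient (x u v : E) :
    ⟪fderiv ℝ (gradient f) x u, v⟫ = fderiv ℝ (fderiv ℝ f) x u v := by
  have hcomp : gradient f = (InnerProductSpace.toDual ℝ E).symm ∘ fderiv ℝ f := rfl
  rw [hcomp, LinearIsometryEquiv.comp_fderiv]
  exact InnerProductSpace.toDual_symm_apply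

lemma isSymmetric_fderiv_gradient (hf : ContDiff ℝ 2 f) (x : E) :
    (fderiv ℝ (gradient f) x : E →ₗ[ℝ] E).IsSymmetric := fun u v => by
  have hsymm := hf.contDiffAt.isSymmSndFDerivAt (x := x) (by simp)
  simp only [ContinuousLinearMap.coe_coe]
  rw [inner_fderiv_gradient, real_inner_comm, inner_fderiv_gradient, hsymm]

lemma hasDerivAt_sub_norm_sq_along_line (hf : Differentiable ℝ f) (x y v : E) (t : ℝ) :
    HasDerivAt (fun s : ℝ => f (x + s • v) - ‖x + s • v - y‖ ^ 2 / 2)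
      (⟪gradient f (x + t • v), v⟫ - ⟪x + t • v - y, v⟫) t := by
  have hline : HasDerivAt (fun s : ℝ => x + s • v) v t := by
    simpa using ((hasDerivAt_id t).smul_const v).const_add x
  have h1 := (hf (x + t • v)).hasFDerivAt.comp_hasDerivAt t hline
  have h2 := (hline.sub_const y).norm_sq.div_const 2
  exact (h1.sub h2).congr_deriv (by rw [inner_gradient_left]; ring)

variable {x y : E}

lemma gradient_eq_sub_of_isMaxOn (hf : Differentiable ℝ f)
    (hx : IsMaxOn (fun z => f z - ‖z - y‖ ^ 2 / 2) univ x) : gradient f x = x - y := by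
  refine ext_inner_right ℝ fun v => ?_
  have hmax : IsLocalMax (fun s : ℝ => f (x + s • v) - ‖x + s • v - y‖ ^ 2 / 2) 0 :=
    IsMaxOn.isLocalMax (fun s _ => by simpa using hx (mem_univ (x + s • v))) univ_mem
  have := (hasDerivAt_sub_norm_sq_along_line hf x y v 0).deriv ▸ hmax.deriv_eq_zero
  simp only [zero_smul, add_zero] at this
  linarith

lemma image_sub_gradient_setOf_isMaxOn [ProperSpace E] (hf : Differentiable ℝ f) {K : ℝ≥0}
    (hlip : LipschitzWith K f) :
    (fun x => x - gradient f x) ''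
      {x | IsMaxOn (fun z => f z - ‖z - (x - gradient f x)‖ ^ 2 / 2) univ x} = univ := by
  refine eq_univ_of_forall fun y => ?_
  obtain ⟨x, hx⟩ := exists_isMaxOn_sub_norm_sq hlip y
  have hy : x - gradient f x = y := by rw [gradient_eq_sub_of_isMaxOn hf hx, sub_sub_cancel]
  exact ⟨x, by simpa only [mem_ofPred_eq, hy] using hx, hy⟩

lemma inner_fderiv_gradient_le_of_isMaxOn (hf : ContDiff ℝ 2 f)
    (hx : IsMaxOn (fun z => f z - ‖z - y‖ ^ 2 / 2) univ x) (v : E) :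
    ⟪fderiv ℝ (gradient f) x v, v⟫ ≤ ‖v‖ ^ 2 := by
  have hf1 : Differentiable ℝ f := hf.differentiable (by norm_num)
  have hgrad : Differentiable ℝ (gradient f) :=
    (contDiff_gradient (m := 1) hf (by norm_num)).differentiable one_ne_zero
  set g : ℝ → ℝ := fun s => f (x + s • v) - ‖x + s • v - y‖ ^ 2 / 2
  have hmax : IsLocalMax g 0 :=
    IsMaxOn.isLocalMax (fun s _ => by simpa [g] using hx (mem_univ (x + s • v))) univ_mem
  have hderiv : deriv g = fun t => ⟪gradient f (x + t • v), v⟫ - ⟪x + t • v - y, v⟫ :=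
    funext fun t => (hasDerivAt_sub_norm_sq_along_line hf1 x y v t).deriv
  have hline : HasDerivAt (fun s : ℝ => x + s • v) v 0 := by
    simpa using ((hasDerivAt_id (0 : ℝ)).smul_const v).const_add x
  have hA := ((hgrad _).hasFDerivAt.comp_hasDerivAt (0 : ℝ) hline).inner ℝ
    (hasDerivAt_const (0 : ℝ) v)
  have hB := (hline.sub_const y).inner ℝ (hasDerivAt_const (0 : ℝ) v)
  have h2 := hA.sub hB
  simp only [zero_smul, add_zero, zero_add, inner_zero_right, real_inner_self_eq_norm_sq] at h2
  replace h2 : HasDerivAt (deriv g) (⟪fderiv ℝ (gradient f) x v, v⟫ - ‖v‖ ^ 2) 0 :=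
    hderiv ▸ h2
  have := hmax.deriv_deriv_nonpos (hasDerivAt_sub_norm_sq_along_line hf1 x y v 0).continuousAt
  rw [h2.deriv] at this
  linarith

end Calculus

lemma _root_.LinearMap.IsPositive.abs_det_le_exp_trace_sub_finrank {E : Type*}
    [NormedAddCommGroup E] [InnerProductSpace ℝ E] [FiniteDimensional ℝ E]
    {C : E →ₗ[ℝ] E} (hC : C.IsPositive) :
    |C.det| ≤ rexp (LinearMap.trace ℝ E C - Module.finrank ℝ E) := by
  have hμ := hC.nonneg_eigenvalues rfl
  rw [hC.isSymmetric.det_eq_prod_eigenvalues rfl, hC.isSymmetric.trace_eq_sum_eigenvalues rfl]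
  simp only [RCLike.ofReal_real_eq_id, id_eq]
  rw [abs_of_nonneg (Finset.prod_nonneg fun i _ => hμ i)]
  calc ∏ i, hC.isSymmetric.eigenvalues rfl i
      ≤ ∏ i, rexp (hC.isSymmetric.eigenvalues rfl i - 1) :=
        Finset.prod_le_prod (fun i _ => hμ i) fun i _ => by
          linarith [Real.add_one_le_exp (hC.isSymmetric.eigenvalues rfl i - 1)]
    _ = _ := by simp [← Real.exp_sum, Finset.sum_sub_distrib]

lemma trace_fderiv_gradient {n : ℕ} (f : EuclideanSpace ℝ (Fin n) → ℝ)
    (x : EuclideanSpace ℝ (Fin n)) :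
    LinearMap.trace ℝ _ (fderiv ℝ (gradient f) x).toLinearMap = lap f x := by
  rw [LinearMap.trace_eq_matrix_trace ℝ (EuclideanSpace.basisFun (Fin n) ℝ).toBasis, lap,
    Matrix.trace]
  refine Finset.sum_congr rfl fun i _ => ?_
  simp [LinearMap.toMatrix_apply]

section ChangeOfVariables

variable {E : Type*} [NormedAddCommGroup E] [NormedSpace ℝ E] [FiniteDimensional ℝ E]
  [MeasurableSpace E] [BorelSpace E] (μ : Measure E) [μ.IsAddHaarMeasure]
  {A : Set E} {S : E → E} {S' : E → E →L[ℝ] E}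

lemma le_map_withDensity_abs_det (hA : MeasurableSet A)
    (hS' : ∀ x ∈ A, HasFDerivWithinAt S (S' x) A x) (hS : Measurable S) (hsurj : S '' A = univ) :
    μ ≤ ((μ.restrict A).withDensity fun x => ENNReal.ofReal |(S' x).det|).map S := by
  refine Measure.le_iff.2 fun B hB => ?_
  have hAB : MeasurableSet (A ∩ S ⁻¹' B) := hA.inter (hS hB)
  calc μ B = μ (S '' (A ∩ S ⁻¹' B)) := by rw [image_inter_preimage, hsurj, univ_inter]
    _ ≤ ∫⁻ x in A ∩ S ⁻¹' B, ENNReal.ofReal |(S' x).det| ∂μ :=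
      addHaar_image_le_lintegral_abs_det_fderiv μ hAB fun x hx =>
        (hS' x hx.1).mono inter_subset_left
    _ = _ := by
      rw [Measure.map_apply hS hB, withDensity_apply _ (hS hB),
        Measure.restrict_restrict (hS hB), inter_comm]

lemma lintegral_le_setLIntegral_comp_mul_abs_det (hA : MeasurableSet A)
    (hS' : ∀ x ∈ A, HasFDerivWithinAt S (S' x) A x) (hS : Measurable S) (hsurj : S '' A = univ)
    {V : E → ℝ≥0∞} (hV : Measurable V) :
    ∫⁻ y, V y ∂μ ≤ ∫⁻ x in A, ENNReal.ofReal |(S' x).det| * V (S x) ∂μ := by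
  have hdet : AEMeasurable (fun x => ENNReal.ofReal |(S' x).det|) (μ.restrict A) :=
    (ContinuousLinearMap.continuous_det.measurable.comp_aemeasurable
      (aemeasurable_fderivWithin μ hA hS')).abs.ennreal_ofReal
  calc ∫⁻ y, V y ∂μ ≤ ∫⁻ y, V y ∂((μ.restrict A).withDensity
        fun x => ENNReal.ofReal |(S' x).det|).map S :=
        lintegral_mono' (le_map_withDensity_abs_det μ hA hS' hS hsurj) le_rfl
    _ = _ := by
      rw [lintegral_map hV hS]
      exact lintegral_withDensity_eq_lintegral_mul₀ hdet (hV.comp hS).aemeasurable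

end ChangeOfVariables

section Integrability

variable {n : ℕ}

lemma integrable_stdGaussian_of_abs_le_exp {g : EuclideanSpace ℝ (Fin n) → ℝ}
    (hg : Continuous g) {C a : ℝ} (hbound : ∀ x, |g x| ≤ C * rexp (a * ‖x‖)) :
    Integrable g (stdGaussian n) := by
  rw [stdGaussian_eq_withDensity, integrable_withDensity_iff
    continuous_gaussDensity.measurable.ennreal_ofReal (.of_forall fun _ => ENNReal.ofReal_lt_top)]
  simp only [ENNReal.toReal_ofReal (gaussDensity_pos _).le]
  have hC : 0 ≤ C := (abs_nonneg _).trans (by simpa using hbound 0)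
  refine ((integrable_exp_neg_mul_norm_sq (n := n) (b := 1 / 4) (by norm_num)).const_mul
    (C * (2 * π) ^ (-(n : ℝ) / 2) * rexp (a ^ 2))).mono'
    (hg.mul continuous_gaussDensity).aestronglyMeasurable (.of_forall fun x => ?_)
  -- completing the square: `a t - t² / 2 ≤ a² - t² / 4`
  have hsq : a * ‖x‖ + -‖x‖ ^ 2 / 2 ≤ a ^ 2 + -(1 / 4) * ‖x‖ ^ 2 := by
    nlinarith [sq_nonneg (‖x‖ / 2 - a)]
  rw [norm_mul, Real.norm_eq_abs, Real.norm_of_nonneg (gaussDensity_pos x).le, gaussDensity]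
  calc |g x| * ((2 * π) ^ (-(n : ℝ) / 2) * rexp (-‖x‖ ^ 2 / 2))
      ≤ C * rexp (a * ‖x‖) * ((2 * π) ^ (-(n : ℝ) / 2) * rexp (-‖x‖ ^ 2 / 2)) := by
        gcongr; exact hbound x
    _ = C * (2 * π) ^ (-(n : ℝ) / 2) * rexp (a * ‖x‖ + -‖x‖ ^ 2 / 2) := by
        rw [Real.exp_add]; ring
    _ ≤ C * (2 * π) ^ (-(n : ℝ) / 2) * rexp (a ^ 2 + -(1 / 4) * ‖x‖ ^ 2) := by gcongr
    _ = _ := by rw [Real.exp_add]; ring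

variable {f : EuclideanSpace ℝ (Fin n) → ℝ} {K : ℝ≥0}

lemma integrable_withDensity_exp_of_abs_le_exp (hf : LipschitzWith K f)
    {g : EuclideanSpace ℝ (Fin n) → ℝ} (hg : Continuous g) {C a : ℝ}
    (hbound : ∀ x, |g x| ≤ C * rexp (a * ‖x‖)) :
    Integrable g ((stdGaussian n).withDensity fun x => ENNReal.ofReal (rexp (f x))) := by
  rw [integrable_withDensity_iff (hf.continuous.rexp.measurable.ennreal_ofReal)
    (.of_forall fun _ => ENNReal.ofReal_lt_top)]
  simp only [ENNReal.toReal_ofReal (Real.exp_nonneg _)]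
  refine integrable_stdGaussian_of_abs_le_exp (hg.mul hf.continuous.rexp)
    (C := C * rexp |f 0|) (a := a + K) fun x => ?_
  have hC : 0 ≤ C := (abs_nonneg _).trans (by simpa using hbound 0)
  have hfx : f x ≤ |f 0| + K * ‖x‖ := (le_abs_self _).trans (abs_le_of_lipschitzWith hf x)
  rw [abs_mul, Real.abs_exp]
  calc |g x| * rexp (f x) ≤ C * rexp (a * ‖x‖) * rexp (|f 0| + K * ‖x‖) := by
        gcongr; exact hbound x
    _ = _ := by rw [mul_assoc, mul_assoc, ← Real.exp_add, ← Real.exp_add]; ring_nf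

lemma norm_sq_le_two_mul_exp (x : EuclideanSpace ℝ (Fin n)) : ‖x‖ ^ 2 ≤ 2 * rexp ‖x‖ := by
  nlinarith [Real.quadratic_le_exp_of_nonneg (norm_nonneg x), norm_nonneg x]

lemma integrable_supConv_stdGaussian (hf : LipschitzWith K f) :
    Integrable (supConv f) (stdGaussian n) := by
  refine integrable_stdGaussian_of_abs_le_exp (continuous_supConv hf)
    (C := |f 0| + K + K ^ 2 / 2) (a := 1) fun y => ?_
  have h1 := le_supConv hf y
  have h2 := supConv_le hf y
  have h3 := abs_le_of_lipschitzWith hf y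
  have h4 : ‖y‖ + 1 ≤ rexp ‖y‖ := Real.add_one_le_exp _
  have h5 : (1 : ℝ) ≤ rexp ‖y‖ := Real.one_le_exp (norm_nonneg y)
  rw [one_mul, abs_le]
  constructor <;> nlinarith [abs_nonneg (f 0), le_abs_self (f y), neg_abs_le (f y),
    K.coe_nonneg, sq_nonneg (K : ℝ), norm_nonneg y]

end Integrability

lemma integral_le_of_lintegral_exp_le {α : Type*} [MeasurableSpace α] {μ : Measure α}
    [IsProbabilityMeasure μ] {u : α → ℝ} (hu : Integrable u μ) {M : ℝ}
    (h : ∫⁻ x, ENNReal.ofReal (rexp (u x)) ∂μ ≤ ENNReal.ofReal (rexp M)) :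
    ∫ x, u x ∂μ ≤ M := by
  have hexp_nonneg : 0 ≤ᵐ[μ] fun x => rexp (u x) := .of_forall fun _ => Real.exp_nonneg _
  have hexp : Integrable (fun x => rexp (u x)) μ :=
    ⟨Real.continuous_exp.comp_aestronglyMeasurable hu.1,
      (hasFiniteIntegral_iff_ofReal hexp_nonneg).2 (h.trans_lt ENNReal.ofReal_lt_top)⟩
  have hint : ∫ x, rexp (u x) ∂μ ≤ rexp M := by
    rw [integral_eq_lintegral_of_nonneg_ae hexp_nonneg hexp.1]
    exact ENNReal.toReal_le_of_le_ofReal (Real.exp_nonneg _) h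
  have hjensen := convexOn_exp.map_integral_le Real.continuous_exp.continuousOn isClosed_univ
    (.of_forall fun _ => mem_univ _) hu hexp
  exact Real.exp_le_exp.1 (hjensen.trans hint)

section Key

variable {n : ℕ} {f : EuclideanSpace ℝ (Fin n) → ℝ} {K : ℝ≥0}

lemma gaussDensity_mul_exp_supConv_sub_gaussWidthFn_le (hf : LipschitzWith K f)
    {T : Set (EuclideanSpace ℝ (Fin n))} {x y : EuclideanSpace ℝ (Fin n)}
    (hx : IsMaxOn (fun z => f z - ‖z - y‖ ^ 2 / 2) univ x) (hxy : x - y ∈ T)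
    (hT : BddAbove (Set.range fun t : T => ⟪y, (t : EuclideanSpace ℝ (Fin n))⟫)) :
    gaussDensity n y * rexp (supConv f y - gaussWidthFn T y) ≤ gaussDensity n x * rexp (f x) := by
  obtain ⟨g, rfl⟩ : ∃ g, y = x - g := ⟨x - y, (sub_sub_cancel x y).symm⟩
  rw [sub_sub_cancel] at hxy
  have hwidth : ⟪x, g⟫ - ‖g‖ ^ 2 ≤ gaussWidthFn T (x - g) := by
    have := inner_le_gaussWidthFn hT hxy
    rwa [inner_sub_left, real_inner_self_eq_norm_sq] at this
  rw [supConv_eq_of_isMaxOn hf hx, sub_sub_cancel, gaussDensity_sub]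
  calc gaussDensity n x * rexp (⟪x, g⟫ - ‖g‖ ^ 2 / 2)
        * rexp (f x - ‖g‖ ^ 2 / 2 - gaussWidthFn T (x - g))
      = gaussDensity n x
        * rexp (f x - ‖g‖ ^ 2 / 2 - gaussWidthFn T (x - g) + (⟪x, g⟫ - ‖g‖ ^ 2 / 2)) := by
        rw [Real.exp_add]; ring
    _ ≤ gaussDensity n x * rexp (f x) := by
      gcongr
      · exact (gaussDensity_pos x).le
      · linarith

lemma abs_det_id_sub_fderiv_gradient_le (hf : ContDiff ℝ 2 f) {M : ℝ}
    (hM : ∀ x, -M ≤ lap f x) {x y : EuclideanSpace ℝ (Fin n)}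
    (hx : IsMaxOn (fun z => f z - ‖z - y‖ ^ 2 / 2) univ x) :
    |(ContinuousLinearMap.id ℝ _ - fderiv ℝ (gradient f) x).det| ≤ rexp M := by
  have hpos : (LinearMap.id - (fderiv ℝ (gradient f) x).toLinearMap).IsPositive := by
    refine ⟨LinearMap.IsSymmetric.id.sub (isSymmetric_fderiv_gradient hf x), fun v => ?_⟩
    have := inner_fderiv_gradient_le_of_isMaxOn hf hx v
    simp only [LinearMap.sub_apply, LinearMap.id_apply, ContinuousLinearMap.coe_coe,
      inner_sub_left, real_inner_self_eq_norm_sq, RCLike.re_to_real]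
    linarith
  have hdet := hpos.abs_det_le_exp_trace_sub_finrank
  simp only [map_sub, LinearMap.trace_id, trace_fderiv_gradient,
    finrank_euclideanSpace_fin] at hdet
  refine hdet.trans (Real.exp_le_exp.2 ?_)
  linarith [hM x]

lemma lintegral_exp_supConv_sub_gaussWidthFn_le (hf : ContDiff ℝ 2 f)
    (hK : ∀ x, ‖gradient f x‖ ≤ K) {M : ℝ} (hM : ∀ x, -M ≤ lap f x)
    (hν : IsProbabilityMeasure
      ((stdGaussian n).withDensity fun x => ENNReal.ofReal (rexp (f x)))) :
    ∫⁻ y, ENNReal.ofReal (rexp (supConv f y - gaussWidthFn (range (gradient f)) y))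
      ∂stdGaussian n ≤ ENNReal.ofReal (rexp M) := by
  have hf1 : Differentiable ℝ f := hf.differentiable (by norm_num)
  have hlip : LipschitzWith K f := lipschitzWith_of_norm_gradient_le hf1 hK
  have hgrad : ContDiff ℝ 1 (gradient f) := contDiff_gradient hf (by norm_num)
  have hKrange : ∀ t ∈ range (gradient f), ‖t‖ ≤ K := forall_mem_range.2 hK
  have hu : Continuous fun y => supConv f y - gaussWidthFn (range (gradient f)) y :=
    (continuous_supConv hlip).sub
      (lipschitzWith_gaussWidthFn (range_nonempty _) hKrange).continuous
  set S : EuclideanSpace ℝ (Fin n) → EuclideanSpace ℝ (Fin n) := fun x => x - gradient f x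
  set A := {x | IsMaxOn (fun z => f z - ‖z - S x‖ ^ 2 / 2) univ x}
  have hS : Continuous S := continuous_id.sub hgrad.continuous
  have hA : IsClosed A := by
    simp only [A, isMaxOn_univ_iff, ofPred_forall]
    exact isClosed_iInter fun z => isClosed_le (by fun_prop) (by fun_prop)
  have hS' : ∀ x ∈ A, HasFDerivWithinAt S
      (ContinuousLinearMap.id ℝ _ - fderiv ℝ (gradient f) x) A x := fun x _ =>
    ((hasFDerivAt_id x).sub (hgrad.differentiable one_ne_zero x).hasFDerivAt).hasFDerivWithinAt
  calc ∫⁻ y, ENNReal.ofReal (rexp (supConv f y - gaussWidthFn (range (gradient f)) y))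
        ∂stdGaussian n
      = ∫⁻ y, ENNReal.ofReal (gaussDensity n y
          * rexp (supConv f y - gaussWidthFn (range (gradient f)) y)) :=
        lintegral_stdGaussian_ofReal hu.rexp.measurable
    _ ≤ ∫⁻ x in A, ENNReal.ofReal |(ContinuousLinearMap.id ℝ _ - fderiv ℝ (gradient f) x).det|
          * ENNReal.ofReal (gaussDensity n (S x)
            * rexp (supConv f (S x) - gaussWidthFn (range (gradient f)) (S x))) :=
        lintegral_le_setLIntegral_comp_mul_abs_det volume hA.measurableSet hS' hS.measurable
          (image_sub_gradient_setOf_isMaxOn hf1 hlip)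
          (continuous_gaussDensity.mul hu.rexp).measurable.ennreal_ofReal
    _ ≤ ∫⁻ x in A, ENNReal.ofReal (rexp M) * ENNReal.ofReal (gaussDensity n x * rexp (f x)) := by
        refine setLIntegral_mono' hA.measurableSet fun x hx => ?_
        have hxS : x - S x ∈ range (gradient f) := ⟨x, by simp [S]⟩
        exact mul_le_mul' (ENNReal.ofReal_le_ofReal (abs_det_id_sub_fderiv_gradient_le hf hM hx))
          (ENNReal.ofReal_le_ofReal (gaussDensity_mul_exp_supConv_sub_gaussWidthFn_le hlip hx hxS
            (bddAbove_range_inner_of_norm_le hKrange _)))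
    _ ≤ ∫⁻ x, ENNReal.ofReal (rexp M) * ENNReal.ofReal (gaussDensity n x * rexp (f x)) :=
        setLIntegral_le_lintegral _ _
    _ = ENNReal.ofReal (rexp M) := by
        rw [lintegral_const_mul' _ _ ENNReal.ofReal_ne_top,
          lintegral_gaussDensity_mul_eq_one hf.continuous.rexp.measurable hν, mul_one]

lemma integral_supConv_le (hf : ContDiff ℝ 2 f) (hK : ∀ x, ‖gradient f x‖ ≤ K) {M : ℝ}
    (hM : ∀ x, -M ≤ lap f x)
    (hν : IsProbabilityMeasure
      ((stdGaussian n).withDensity fun x => ENNReal.ofReal (rexp (f x))))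
    (hD : Integrable (gaussWidthFn (range (gradient f))) (stdGaussian n)) :
    ∫ y, supConv f y ∂stdGaussian n
      ≤ M + ∫ y, gaussWidthFn (range (gradient f)) y ∂stdGaussian n := by
  have hQ := integrable_supConv_stdGaussian
    (lipschitzWith_of_norm_gradient_le (hf.differentiable (by norm_num)) hK)
  have := integral_le_of_lintegral_exp_le (u := fun y => supConv f y - _) (hQ.sub hD)
    (lintegral_exp_supConv_sub_gaussWidthFn_le hf hK hM hν)
  rw [integral_sub hQ hD] at this
  linarith

end Key

section Transport

lemma integral_map_fst_le_integral_add_integral_map_snd {X Y : Type*} [MeasurableSpace X]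
    [MeasurableSpace Y] {p : Measure (X × Y)} {φ : X → ℝ} {ψ : Y → ℝ} {c : X × Y → ℝ}
    (hφ : Integrable φ (p.map Prod.fst)) (hψ : Integrable ψ (p.map Prod.snd))
    (hc : Integrable c p) (h : ∀ x y, φ x ≤ c (x, y) + ψ y) :
    ∫ x, φ x ∂p.map Prod.fst ≤ ∫ q, c q ∂p + ∫ y, ψ y ∂p.map Prod.snd := by
  have hφ' : Integrable (fun q : X × Y => φ q.1) p :=
    (integrable_map_measure hφ.1 measurable_fst.aemeasurable).1 hφ
  have hψ' : Integrable (fun q : X × Y => ψ q.2) p :=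
    (integrable_map_measure hψ.1 measurable_snd.aemeasurable).1 hψ
  rw [integral_map measurable_fst.aemeasurable hφ.1, integral_map measurable_snd.aemeasurable hψ.1,
    ← integral_add hc hψ']
  exact integral_mono hφ' (hc.add hψ') fun q => h q.1 q.2

lemma integrable_norm_sub_sq {E : Type*} [NormedAddCommGroup E] [MeasurableSpace E]
    {p : Measure (E × E)} (h₁ : MemLp id 2 (p.map Prod.fst)) (h₂ : MemLp id 2 (p.map Prod.snd)) :
    Integrable (fun q : E × E => ‖q.1 - q.2‖ ^ 2) p := by
  have h₁' := (memLp_map_measure_iff h₁.1 measurable_fst.aemeasurable).1 h₁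
  have h₂' := (memLp_map_measure_iff h₂.1 measurable_snd.aemeasurable).1 h₂
  exact (h₁'.sub h₂').integrable_norm_pow (p := 2) two_ne_zero

variable {n : ℕ}

lemma le_W2sq {ν γ : Measure (EuclideanSpace ℝ (Fin n))} [IsProbabilityMeasure ν]
    [IsProbabilityMeasure γ] {a : ℝ}
    (h : ∀ p, IsCoupling p ν γ → IsProbabilityMeasure p → a ≤ ∫ q, ‖q.1 - q.2‖ ^ 2 ∂p) :
    a ≤ W2sq ν γ :=
  le_csInf ⟨_, ν.prod γ, ⟨by simp, by simp⟩, inferInstance, rfl⟩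
    (by rintro _ ⟨p, hp, hpp, rfl⟩; exact h p hp hpp)

lemma memLp_two_id_stdGaussian : MemLp id 2 (stdGaussian n) :=
  (memLp_two_iff_integrable_sq_norm aestronglyMeasurable_id).2
    (integrable_stdGaussian_of_abs_le_exp (by fun_prop) (C := 2) (a := 1) fun x => by
      simpa using norm_sq_le_two_mul_exp x)

lemma memLp_two_id_withDensity_exp {f : EuclideanSpace ℝ (Fin n) → ℝ} {K : ℝ≥0}
    (hf : LipschitzWith K f) :
    MemLp id 2 ((stdGaussian n).withDensity fun x => ENNReal.ofReal (rexp (f x))) :=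
  (memLp_two_iff_integrable_sq_norm aestronglyMeasurable_id).2
    (integrable_withDensity_exp_of_abs_le_exp hf (by fun_prop) (C := 2) (a := 1) fun x => by
      simpa using norm_sq_le_two_mul_exp x)

end Transport

end ReverseTransport

open ReverseTransport in
theorem reverse_transport_inequality_general (n : ℕ)
    (f : EuclideanSpace ℝ (Fin n) → ℝ) (ν : Measure (EuclideanSpace ℝ (Fin n))) (M : ℝ)
    (hf : ContDiff ℝ 2 f)
    (hν : ν = (stdGaussian n).withDensity fun x => ENNReal.ofReal (Real.exp (f x)))
    (hprob : IsProbabilityMeasure ν)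
    (hent : Integrable f ν)
    (hbdd : ∀ y : EuclideanSpace ℝ (Fin n),
      BddAbove (Set.range fun t : Set.range (gradient f) =>
        ⟪y, (t : EuclideanSpace ℝ (Fin n))⟫))
    (hD : Integrable (gaussWidthFn (Set.range (gradient f))) (stdGaussian n))
    (hM : IsGLB (Set.range (lap f)) (-M)) :
    ∫ x, f x ∂ν
      ≤ (1 / 2) * W2sq ν (stdGaussian n) + M
        + ∫ y, gaussWidthFn (Set.range (gradient f)) y ∂(stdGaussian n) := by
  obtain ⟨K, hK⟩ := exists_norm_le_of_bddAbove_inner hbdd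
  have hgrad : ∀ x, ‖gradient f x‖ ≤ K := fun x => hK _ ⟨x, rfl⟩
  have hlip := lipschitzWith_of_norm_gradient_le (hf.differentiable (by norm_num)) hgrad
  have hsupConv := integral_supConv_le hf hgrad (fun x => hM.1 ⟨x, rfl⟩) (hν ▸ hprob) hD
  suffices h : 2 * (∫ x, f x ∂ν - ∫ y, supConv f y ∂stdGaussian n) ≤ W2sq ν (stdGaussian n) by
    linarith
  refine le_W2sq fun p ⟨hp₁, hp₂⟩ _ => ?_
  have h := integral_map_fst_le_integral_add_integral_map_snd (c := fun q => ‖q.1 - q.2‖ ^ 2 / 2)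
    (hp₁ ▸ hent) (hp₂ ▸ integrable_supConv_stdGaussian hlip)
    ((integrable_norm_sub_sq (hp₁ ▸ hν ▸ memLp_two_id_withDensity_exp hlip)
      (hp₂ ▸ memLp_two_id_stdGaussian)).div_const 2)
    fun x y => by linarith [sub_norm_sq_le_supConv hlip x y]
  rw [hp₁, hp₂, integral_div] at h
  linarith

theorem reverse_transport_inequality (n : ℕ)
    (f : EuclideanSpace ℝ (Fin n) → ℝ) (ν : Measure (EuclideanSpace ℝ (Fin n))) (M : ℝ)
    (hf : ContDiff ℝ 2 f)
    (hν : ν = (stdGaussian n).withDensity fun x => ENNReal.ofReal (Real.exp (f x)))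
    (hprob : IsProbabilityMeasure ν)
    (hent : Integrable f ν)
    (hfish : Integrable (fun x => ‖gradient f x‖ ^ 2) ν)
    (hbdd : ∀ y : EuclideanSpace ℝ (Fin n),
      BddAbove (Set.range fun t : Set.range (gradient f) =>
        ⟪y, (t : EuclideanSpace ℝ (Fin n))⟫))
    (hD : Integrable (gaussWidthFn (Set.range (gradient f))) (stdGaussian n))
    (hM : IsGLB (Set.range (lap f)) (-M)) :
    ∫ x, f x ∂ν
      ≤ (1 / 2) * W2sq ν (stdGaussian n) + M
        + ∫ y, gaussWidthFn (Set.range (gradient f)) y ∂(stdGaussian n) :=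
  reverse_transport_inequality_general n f ν M hf hν hprob hent hbdd hD hM
end
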